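/- Let B be a commutative Hopf algebra and t ∈ B a trace-like element. Then the bilinear form •_t : B × B → K defined by b •_t c = b̄(c) (where b̄ ∈ g is the unique derivation mapped to the class of b under the isomorphism μ ↦ μ(t')p(t'') from g to I/I²) is a balanced biderivation, and moreover b •_t c = (b •_t t')(c •_t t'') for all b, c ∈ B. -/

import Mathlib

open scoped TensorProduct

section TraceLike

variable (K B : Type*) [CommRing K] [CommRing B] [HopfAlgebra K B]

/-- The submodule `K·1_B + I²` of `B`, where `I = Ker ε`; the quotient
`B ⧸ (K·1_B + I²)` is canonically identified with `I/I²` via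
`b ↦ b - ε(b)1 mod I²`. -/
noncomputable def augSquare : Submodule K B :=
  Submodule.span K {(1 : B)} ⊔
    Submodule.restrictScalars K
      ((RingHom.ker (Bialgebra.counitAlgHom K B).toRingHom) ^ 2)

/-- A linear functional `μ : B → K` is a derivation:
`μ(bc) = ε(b)μ(c) + ε(c)μ(b)`. -/
def IsCounitDer (μ : B →ₗ[K] K) : Prop :=
  ∀ b c : B,
    μ (b * c) =
      Coalgebra.counit (R := K) b * μ c + Coalgebra.counit (R := K) c * μ b

/-- The map `g → I/I²`, `μ ↦ μ(t')·p(t'')` determined by `t ∈ B` (with `I/I²`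
realized as `B ⧸ (K·1 + I²)`). -/
noncomputable def psiMap (t : B) (μ : B →ₗ[K] K) : B ⧸ augSquare K B :=
  TensorProduct.lift
    (LinearMap.mk₂ K (fun a b => μ a • (augSquare K B).mkQ b)
      (fun m₁ m₂ n => by simp [add_smul])
      (fun c m n => by simp [mul_smul])
      (fun m n₁ n₂ => by simp)
      (fun c m n => by simp [smul_comm c (μ m)]))
    (Coalgebra.comul t)

/-- The iterated comultiplication `b ↦ b' ⊗ b'' ⊗ b'''`. -/
noncomputable def comulIter3 (b : B) : (B ⊗[K] B) ⊗[K] B :=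
  LinearMap.rTensor B (Coalgebra.comul (R := K)) (Coalgebra.comul b)

end TraceLike

/-!
Write `⋆` for convolution and `μ̂ = algebraMap ∘ μ`. A derivation `D` along the counit vanishes
on `K·1 + I²`, so `ψ(μ) = [b]` forces `D b = (μ̂ ⋆ D)(t)`. For a commutative target, cosymmetry
of `t` gives `(f ⋆ g)(t) = (g ⋆ f)(t)`; with `D = b̄` and `μ = c̄` this is the formula
`b • c = (b • t')(c • t'')`. Bilinearity and the derivation rule in the first variable follow from
the injectivity of `ψ`. For balancedness put `β = b̄̂`, `γ = c̄̂`. The Leibniz rule for convolution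
and `s ⋆ id = id ⋆ s = ε` make `s ⋆ β ⋆ id` and `id ⋆ γ ⋆ s` derivations along the counit, so
`(s ⋆ β ⋆ id)(c) = (γ ⋆ s ⋆ β ⋆ id)(t)` and `(id ⋆ γ ⋆ s)(b) = (β ⋆ id ⋆ γ ⋆ s)(t)`, and
cosymmetry swaps `γ ⋆ s` past `β ⋆ id`.
-/

open Coalgebra HopfAlgebra TensorProduct WithConv

theorem AlgHom.ofConv_convMul_apply {K B A : Type*} [CommSemiring K] [Semiring B] [Bialgebra K B]
    [CommSemiring A] [Algebra K A] (φ₁ φ₂ : B →ₐ[K] A) (x : B) :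
    (toConv φ₁ * toConv φ₂).ofConv x = (toConv φ₁.toLinearMap * toConv φ₂.toLinearMap) x :=
  rfl

theorem AlgHom.id_antipode_cancel {K B : Type*} [CommSemiring K] [CommSemiring B]
    [HopfAlgebra K B] : toConv (AlgHom.id K B) * toConv (antipodeAlgHom K B) = 1 :=
  mul_inv_cancel (toConv (AlgHom.id K B))

theorem convMul_apply_comm_of_comm_comul {K C A : Type*} [CommSemiring K] [AddCommMonoid C]
    [Module K C] [CoalgebraStruct K C] [CommSemiring A] [Algebra K A] {t : C}
    (ht : TensorProduct.comm K C C (comul t) = comul t) (f g : WithConv (C →ₗ[K] A)) :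
    (f * g) t = (g * f) t := by
  rw [LinearMap.convMul_apply, ← ht, map_comm, LinearMap.mul'_comm, LinearMap.convMul_apply]

section Derivation

variable {K B A : Type*} [CommSemiring K] [Semiring B] [Bialgebra K B] [CommSemiring A]
  [Algebra K A]

def IsDerivationAlong (φ : B →ₐ[K] A) (D : B →ₗ[K] A) : Prop :=
  ∀ x y, D (x * y) = φ x * D y + φ y * D x

theorem isDerivationAlong_zero (φ : B →ₐ[K] A) : IsDerivationAlong φ 0 := fun x y => by simp

namespace IsDerivationAlong

variable {φ φ₁ φ₂ : B →ₐ[K] A} {D D₁ D₂ : B →ₗ[K] A}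

theorem add (h₁ : IsDerivationAlong φ D₁) (h₂ : IsDerivationAlong φ D₂) :
    IsDerivationAlong φ (D₁ + D₂) := fun x y => by
  simp only [LinearMap.add_apply, h₁ x y, h₂ x y]
  ring

theorem smul (h : IsDerivationAlong φ D) (k : K) : IsDerivationAlong φ (k • D) := fun x y => by
  simp only [LinearMap.smul_apply, h x y, smul_add, mul_smul_comm]

theorem leibniz (h₁ : IsDerivationAlong φ₁ D₁) (h₂ : IsDerivationAlong φ₂ D₂) :
    IsDerivationAlong (toConv φ₁ * toConv φ₂).ofConv
      (toConv D₁ * toConv φ₂.toLinearMap + toConv φ₁.toLinearMap * toConv D₂).ofConv := by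
  intro x y
  set rx := ℛ K x
  set ry := ℛ K y
  simp only [AlgHom.ofConv_convMul_apply, ofConv_add, LinearMap.add_apply,
    (rx.mul ry).convMul_apply, rx.convMul_apply, ry.convMul_apply, Repr.mul_index, Repr.mul_left,
    Repr.mul_right, Finset.sum_product, ← Finset.sum_add_distrib, Finset.sum_mul, Finset.mul_sum]
  rw [Finset.sum_comm (s := ry.index), ← Finset.sum_add_distrib]
  refine Finset.sum_congr rfl fun i _ => ?_
  rw [← Finset.sum_add_distrib]
  refine Finset.sum_congr rfl fun j _ => ?_
  simp only [AlgHom.toLinearMap_apply, map_mul, h₁ _ _, h₂ _ _]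
  ring

theorem algHom_convMul (h : IsDerivationAlong φ D) (f : B →ₐ[K] A) :
    IsDerivationAlong (toConv f * toConv φ).ofConv (toConv f.toLinearMap * toConv D).ofConv := by
  simpa using (isDerivationAlong_zero f).leibniz h

theorem convMul_algHom (h : IsDerivationAlong φ D) (f : B →ₐ[K] A) :
    IsDerivationAlong (toConv φ * toConv f).ofConv (toConv D * toConv f.toLinearMap).ofConv := by
  simpa using h.leibniz (isDerivationAlong_zero f)

theorem algHom_comp {A' : Type*} [CommSemiring A'] [Algebra K A'] (h : IsDerivationAlong φ D)
    (g : A →ₐ[K] A') : IsDerivationAlong (g.comp φ) (g.toLinearMap ∘ₗ D) := fun x y => by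
  simp [h x y]

end IsDerivationAlong

end Derivation

section

variable {K B : Type*} [CommRing K] [CommRing B] [HopfAlgebra K B]

theorem isCounitDer_iff_isDerivationAlong {μ : B →ₗ[K] K} :
    IsCounitDer K B μ ↔ IsDerivationAlong (Bialgebra.counitAlgHom K B) μ :=
  Iff.rfl

theorem convMul_convMul_apply_of_sum_eq_comulIter3 {A : Type*} [CommSemiring A] [Algebra K A]
    {f g h : B →ₗ[K] A} {b : B} {ι : Type*} {s : Finset ι} {x₁ x₂ x₃ : ι → B}
    (hb : ∑ i ∈ s, (x₁ i ⊗ₜ[K] x₂ i) ⊗ₜ[K] x₃ i = comulIter3 K B b) :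
    (toConv f * toConv g * toConv h) b = ∑ i ∈ s, f (x₁ i) * g (x₂ i) * h (x₃ i) := by
  rw [LinearMap.convMul_apply, LinearMap.convMul_def, ofConv_toConv, ← LinearMap.comp_assoc,
    ← LinearMap.map_rTensor, ← comulIter3, ← hb]
  simp

theorem psiMap_eq_sum (t : B) (μ : B →ₗ[K] K) {ι : Type*} (r : Repr K t ι) :
    psiMap K B t μ = ∑ i ∈ r.index, μ (r.left i) • (augSquare K B).mkQ (r.right i) := by
  rw [psiMap, ← r.eq, map_sum]
  rfl

theorem psiMap_add (t : B) (μ ν : B →ₗ[K] K) :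
    psiMap K B t (μ + ν) = psiMap K B t μ + psiMap K B t ν := by
  simp only [psiMap_eq_sum t _ (ℛ K t), LinearMap.add_apply, add_smul, Finset.sum_add_distrib]

theorem psiMap_smul (t : B) (k : K) (μ : B →ₗ[K] K) :
    psiMap K B t (k • μ) = k • psiMap K B t μ := by
  simp only [psiMap_eq_sum t _ (ℛ K t), LinearMap.smul_apply, smul_eq_mul, mul_smul,
    Finset.smul_sum]

theorem sub_counit_smul_one_mem_ker (b : B) :
    b - counit (R := K) b • 1 ∈ RingHom.ker (Bialgebra.counitAlgHom K B).toRingHom := by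
  simp [RingHom.mem_ker, Algebra.smul_def]

theorem augSquare_mkQ_mul (b c : B) :
    (augSquare K B).mkQ (b * c) =
      counit (R := K) b • (augSquare K B).mkQ c + counit (R := K) c • (augSquare K B).mkQ b := by
  have hfac : b * c - (counit (R := K) b • c + counit (R := K) c • b) =
      (b - counit (R := K) b • 1) * (c - counit (R := K) c • 1) -
        (counit (R := K) b * counit (R := K) c) • 1 := by
    simp only [Algebra.smul_def, map_mul]
    ring
  rw [← map_smul, ← map_smul, ← map_add, Submodule.mkQ_apply, Submodule.mkQ_apply,
    Submodule.Quotient.eq, hfac]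
  refine Submodule.sub_mem _ (Submodule.mem_sup_right ?_)
    (Submodule.mem_sup_left (Submodule.smul_mem _ _ (Submodule.mem_span_singleton_self _)))
  rw [Submodule.restrictScalars_mem, pow_two]
  exact Ideal.mul_mem_mul (sub_counit_smul_one_mem_ker b) (sub_counit_smul_one_mem_ker c)

namespace IsDerivationAlong

variable {A : Type*} [CommRing A] [Algebra K A] {D : B →ₗ[K] A}

theorem augSquare_le_ker (hD : IsDerivationAlong (1 : WithConv (B →ₐ[K] A)).ofConv D) :
    augSquare K B ≤ LinearMap.ker D := by
  have h_one : D 1 = 0 := by simpa using hD 1 1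
  have h_sq : ∀ x ∈ RingHom.ker (Bialgebra.counitAlgHom K B).toRingHom,
      ∀ y ∈ RingHom.ker (Bialgebra.counitAlgHom K B).toRingHom, D (x * y) = 0 := by
    intro x hx y hy
    rw [RingHom.mem_ker] at hx hy
    simp_all [hD x y]
  refine sup_le ?_ ?_
  · rw [Submodule.span_le, Set.singleton_subset_iff]
    exact h_one
  · intro z hz
    rw [Submodule.restrictScalars_mem, pow_two] at hz
    exact Submodule.mul_induction_on hz h_sq fun x y hx hy => by simp_all

theorem eq_convMul_of_psiMap_eq (hD : IsDerivationAlong (1 : WithConv (B →ₐ[K] A)).ofConv D)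
    {t b : B} {μ : B →ₗ[K] K} (hμ : psiMap K B t μ = (augSquare K B).mkQ b) :
    D b = (toConv (Algebra.linearMap K A ∘ₗ μ) * toConv D) t := by
  calc D b = (augSquare K B).liftQ D hD.augSquare_le_ker ((augSquare K B).mkQ b) := rfl
    _ = (augSquare K B).liftQ D hD.augSquare_le_ker (psiMap K B t μ) := by rw [hμ]
    _ = _ := by simp [psiMap_eq_sum t μ (ℛ K t), (ℛ K t).convMul_apply, Algebra.smul_def]

end IsDerivationAlong

theorem antipode_convMul_convMul_id_apply_eq {t b c : B}
    (ht : TensorProduct.comm K B B (comul t) = comul t) {μ ν : B →ₗ[K] K}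
    (hμ : IsDerivationAlong (Bialgebra.counitAlgHom K B) μ)
    (hν : IsDerivationAlong (Bialgebra.counitAlgHom K B) ν)
    (hb : psiMap K B t μ = (augSquare K B).mkQ b) (hc : psiMap K B t ν = (augSquare K B).mkQ c) :
    (toConv (antipode K) * toConv (Algebra.linearMap K B ∘ₗ μ) * toConv LinearMap.id :
        WithConv (B →ₗ[K] B)) c =
      (toConv LinearMap.id * toConv (Algebra.linearMap K B ∘ₗ ν) * toConv (antipode K) :
        WithConv (B →ₗ[K] B)) b := by
  set S : WithConv (B →ₗ[K] B) := toConv (antipode K)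
  set I : WithConv (B →ₗ[K] B) := toConv LinearMap.id
  set μ' : WithConv (B →ₗ[K] B) := toConv (Algebra.linearMap K B ∘ₗ μ)
  set ν' : WithConv (B →ₗ[K] B) := toConv (Algebra.linearMap K B ∘ₗ ν)
  have hμ' : IsDerivationAlong (1 : WithConv (B →ₐ[K] B)).ofConv μ'.ofConv :=
    hμ.algHom_comp (Algebra.ofId K B)
  have hν' : IsDerivationAlong (1 : WithConv (B →ₐ[K] B)).ofConv ν'.ofConv :=
    hν.algHom_comp (Algebra.ofId K B)
  have hΦ : IsDerivationAlong (1 : WithConv (B →ₐ[K] B)).ofConv (S * μ' * I).ofConv := by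
    simpa [AlgHom.antipode_id_cancel] using
      (hμ'.algHom_convMul (antipodeAlgHom K B)).convMul_algHom (AlgHom.id K B)
  have hΨ : IsDerivationAlong (1 : WithConv (B →ₐ[K] B)).ofConv (I * ν' * S).ofConv := by
    simpa [AlgHom.id_antipode_cancel] using
      (hν'.algHom_convMul (AlgHom.id K B)).convMul_algHom (antipodeAlgHom K B)
  calc (S * μ' * I) c = (ν' * (S * μ' * I)) t := hΦ.eq_convMul_of_psiMap_eq hc
    _ = (ν' * S * (μ' * I)) t := by simp only [mul_assoc]
    _ = (μ' * I * (ν' * S)) t := convMul_apply_comm_of_comm_comul ht _ _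
    _ = (μ' * (I * ν' * S)) t := by simp only [mul_assoc]
    _ = (I * ν' * S) b := (hΨ.eq_convMul_of_psiMap_eq hb).symm

end

/-- Let `B` be a commutative Hopf algebra and `t ∈ B` a
trace-like element (cosymmetric, and with the map `ψ : g → I/I²`,
`μ ↦ μ(t')p(t'')` bijective on derivations).  Then the bilinear form
`•_t : B × B → K`, `b •_t c = b̄(c)` — where `b̄` is the unique derivation
mapped to the class of `b` under `ψ` — is a balanced biderivation, and
moreover `b •_t c = (b •_t t')(c •_t t'')` for all `b, c ∈ B`. -/
theorem trace_like_balanced_biderivation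
    {K B : Type*} [CommRing K] [CommRing B] [HopfAlgebra K B] (t : B)
    (hcos : TensorProduct.comm K B B (Coalgebra.comul t) = Coalgebra.comul (R := K) t)
    (hbij : Function.Bijective
      (fun μ : {μ : B →ₗ[K] K // IsCounitDer K B μ} => psiMap K B t μ.1))
    (bar : B → {μ : B →ₗ[K] K // IsCounitDer K B μ})
    (hbar : ∀ b : B, psiMap K B t (bar b).1 = (augSquare K B).mkQ b) :
    -- `•_t` is bilinear (linearity in the second variable holds since each
    -- `b̄` is a linear map):
    (∀ b b' c : B, (bar (b + b')).1 c = (bar b).1 c + (bar b').1 c) ∧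
    (∀ (k : K) (b c : B), (bar (k • b)).1 c = k * (bar b).1 c) ∧
    -- `•_t` is a biderivation:
    (∀ b c d : B,
      (bar (b * c)).1 d =
        Coalgebra.counit (R := K) b * (bar c).1 d +
          Coalgebra.counit (R := K) c * (bar b).1 d) ∧
    (∀ b c d : B,
      (bar d).1 (b * c) =
        Coalgebra.counit (R := K) b * (bar d).1 c +
          Coalgebra.counit (R := K) c * (bar d).1 b) ∧
    -- `•_t` is balanced: `(b • c'')·s(c')c''' = (c • b'')·s(b''')b'`:
    (∀ (b c : B) (sb sc : Finset ℕ) (b1 b2 b3 c1 c2 c3 : ℕ → B),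
      (∑ i ∈ sb, (b1 i ⊗ₜ[K] b2 i) ⊗ₜ[K] b3 i = comulIter3 K B b) →
      (∑ j ∈ sc, (c1 j ⊗ₜ[K] c2 j) ⊗ₜ[K] c3 j = comulIter3 K B c) →
      ∑ j ∈ sc, (bar b).1 (c2 j) • (HopfAlgebra.antipode (R := K) (c1 j) * c3 j) =
        ∑ i ∈ sb, (bar c).1 (b2 i) • (HopfAlgebra.antipode (R := K) (b3 i) * b1 i)) ∧
    -- the formula `b •_t c = (b •_t t')(c •_t t'')`:
    (∀ (b c : B) (st : Finset ℕ) (t1 t2 : ℕ → B),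
      (∑ i ∈ st, t1 i ⊗ₜ[K] t2 i = Coalgebra.comul t) →
      (bar b).1 c = ∑ i ∈ st, (bar b).1 (t1 i) * (bar c).1 (t2 i)) := by
  have hder (b : B) : IsDerivationAlong (Bialgebra.counitAlgHom K B) (bar b).1 :=
    isCounitDer_iff_isDerivationAlong.1 (bar b).2
  have hbar_unique (b : B) (μ : B →ₗ[K] K)
      (hμ : IsDerivationAlong (Bialgebra.counitAlgHom K B) μ)
      (hψ : psiMap K B t μ = (augSquare K B).mkQ b) : (bar b).1 = μ :=
    congrArg Subtype.val (hbij.1 ((hbar b).trans hψ.symm) : bar b = ⟨μ, hμ⟩)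
  refine ⟨fun b b' c => ?_, fun k b c => ?_, fun b c d => ?_, fun b c d => (bar d).2 b c, ?_, ?_⟩
  · rw [hbar_unique _ _ ((hder b).add (hder b')) (by rw [psiMap_add, hbar, hbar, map_add])]
    rfl
  · rw [hbar_unique _ _ ((hder b).smul k) (by rw [psiMap_smul, hbar, map_smul])]
    rfl
  · rw [hbar_unique (b * c) _ (((hder c).smul _).add ((hder b).smul _))
      (by rw [psiMap_add, psiMap_smul, psiMap_smul, hbar, hbar, augSquare_mkQ_mul])]
    rfl
  · intro b c sb sc b1 b2 b3 c1 c2 c3 hb hc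
    have h := antipode_convMul_convMul_id_apply_eq hcos (hder b) (hder c) (hbar b) (hbar c)
    rw [convMul_convMul_apply_of_sum_eq_comulIter3 hc,
      convMul_convMul_apply_of_sum_eq_comulIter3 hb] at h
    convert h using 2 <;>
      simp only [Algebra.smul_def, LinearMap.comp_apply, Algebra.linearMap_apply,
        LinearMap.id_apply] <;>
      ring
  · intro b c st t1 t2 ht
    rw [(hder b).eq_convMul_of_psiMap_eq (hbar c), convMul_apply_comm_of_comm_comul hcos,
      Repr.convMul_apply ⟨st, t1, t2, ht⟩]
    simp
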